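/- Let H be an infinite-dimensional complex Hilbert space, B = K(H) the compact operators, and ψ ∈ B* a functional given by a trace-class operator with nonzero trace. Then the derivation D = adj_ψ : B → B*, D(a) = ψa − aψ (where (ψa)(b) = ψ(ab) and (aψ)(b) = ψ(ba)), is not an inner Jordan derivation: there exist no finite families φ₁,…,φ_m ∈ B* and a₁,…,a_m ∈ B with D = ∑_i (L(φ_i)L(a_i) − L(a_i)L(φ_i)), where L denotes the Jordan module multiplication (a∘φ)(b) = φ(a∘b) with a∘b = (ab+ba)/2. -/

import Mathlib

/-- The compact operators on a complex Hilbert space, as a submodule of `H →L[ℂ] H`. -/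
noncomputable abbrev KH (H : Type*) [NormedAddCommGroup H] [InnerProductSpace ℂ H] :
    Submodule ℂ (H →L[ℂ] H) :=
  compactOperator (RingHom.id ℂ) H H

/-- The (associative) product of two compact operators. -/
noncomputable def kmul {H : Type*} [NormedAddCommGroup H] [InnerProductSpace ℂ H]
    (a b : KH H) : KH H :=
  ⟨(a : H →L[ℂ] H).comp (b : H →L[ℂ] H), by
    exact a.2.comp_clm (b : H →L[ℂ] H)⟩

/-- The Jordan product `a∘b = (ab+ba)/2` of compact operators. -/
noncomputable def kjo {H : Type*} [NormedAddCommGroup H] [InnerProductSpace ℂ H]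
    (a b : KH H) : KH H :=
  (2 : ℂ)⁻¹ • (kmul a b + kmul b a)

/-!
If `adj_ψ = ∑ᵢ [L(φᵢ), L(cᵢ)]`, then, since `(c∘a)∘b - a∘(c∘b) = ¼[c, [a, b]]`, the functional
`χ := ψ - ¼ ∑ᵢ φᵢ [cᵢ, ·]` vanishes on commutators. So `χ` takes one value `λ` on all diagonal
matrix units `E_jj = [E_jk, E_kj] + E_kk`, and `χ(P_s) = |s| λ` for the diagonal projections
`P_s = ∑_{j ∈ s} E_jj`. As `s` grows, `P_s → 1` strongly with `‖P_s‖ ≤ 1`, hence `P_s c → c` and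
(through `c†`, also compact) `c P_s → c` in norm for compact `c`. Thus `[c, P_s] → 0`, and `χ(P_s)`
has the same limit as `ψ(P_s)`, namely `Tr t ≠ 0`; but `|s| λ` can only converge to `0`.
-/

open Filter Topology InnerProductSpace ContinuousLinearMap
open scoped NNReal InnerProduct

section CompactApprox

variable {𝕜 E F : Type*} [RCLike 𝕜] [NormedAddCommGroup E] [NormedSpace 𝕜 E]
  [NormedAddCommGroup F] [NormedSpace 𝕜 F]

theorem tendsto_comp_of_isCompactOperator {α : Type*} {l : Filter α} {T : α → F →L[𝕜] F}
    {C : ℝ≥0} (hT : ∀ a, ‖T a‖ ≤ C) (hlim : ∀ y, Tendsto (fun a ↦ T a y) l (𝓝 y))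
    {c : E →L[𝕜] F} (hc : IsCompactOperator c) :
    Tendsto (fun a ↦ T a ∘L c) l (𝓝 c) := by
  rw [tendsto_iff_norm_sub_tendsto_zero, Metric.tendsto_nhds]
  intro ε hε
  -- `ε/3`-argument on a finite `δ`-net of a compact set containing the image of the unit ball
  set δ := ε / (2 * (C + 2)) with hδ_def
  have hδ : 0 < δ := by positivity
  obtain ⟨K, hK, hcK⟩ := hc.image_closedBall_subset_compact (1 : ℝ)
  obtain ⟨N, -, hNfin, hKN⟩ := hK.finite_cover_balls hδ
  have hnear : ∀ᶠ a in l, ∀ y ∈ N, ‖T a y - y‖ < δ :=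
    (eventually_all_finite hNfin).2 fun y _ ↦
      (tendsto_iff_norm_sub_tendsto_zero.1 (hlim y)).eventually (gt_mem_nhds hδ)
  filter_upwards [hnear] with a ha
  rw [dist_zero_right, norm_norm]
  refine (opNorm_le_of_unit_norm (by positivity : 0 ≤ (C + 2) * δ) fun x hx ↦ ?_).trans_lt ?_
  · obtain ⟨y, hyN, hy⟩ := Set.mem_iUnion₂.1 (hKN (hcK ⟨x, by simp [hx], rfl⟩))
    rw [mem_ball_iff_norm] at hy
    calc ‖(T a ∘L c - c) x‖ = ‖T a (c x - y) + (T a y - y) + (y - c x)‖ := by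
          simp only [sub_apply, comp_apply, map_sub]; abel_nf
      _ ≤ ‖T a (c x - y)‖ + ‖T a y - y‖ + ‖y - c x‖ := norm_add₃_le
      _ ≤ C * δ + δ + δ := by
          gcongr
          · exact (T a).le_of_opNorm_le_of_le (hT a) hy.le
          · exact (ha y hyN).le
          · rw [norm_sub_rev]; exact hy.le
      _ = (C + 2) * δ := by ring
  · rw [hδ_def]
    field_simp
    linarith

end CompactApprox

section FinsetProj

variable {ι 𝕜 E F : Type*} [RCLike 𝕜] [NormedAddCommGroup E] [InnerProductSpace 𝕜 E]
  [NormedAddCommGroup F] [InnerProductSpace 𝕜 F]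

theorem isCompactOperator_rankOne (x : E) (y : F) : IsCompactOperator (rankOne 𝕜 x y) :=
  (isCompactOperator_of_locallyCompactSpace_rng (toSpanSingleton 𝕜 x)).comp_clm (innerSL 𝕜 y)

noncomputable def HilbertBasis.finsetProj (w : HilbertBasis ι 𝕜 E) (s : Finset ι) : E →L[𝕜] E :=
  ∑ j ∈ s, rankOne 𝕜 (w j) (w j)

namespace HilbertBasis

variable (w : HilbertBasis ι 𝕜 E) (s : Finset ι)

theorem finsetProj_apply (x : E) : w.finsetProj s x = ∑ j ∈ s, inner 𝕜 (w j) x • w j := by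
  simp [finsetProj]

theorem norm_finsetProj_apply_le (x : E) : ‖w.finsetProj s x‖ ≤ ‖x‖ := by
  have hsq : ‖w.finsetProj s x‖ ^ 2 = ∑ j ∈ s, ‖inner 𝕜 (w j) x‖ ^ 2 := by
    rw [finsetProj_apply, ← inner_self_eq_norm_sq (𝕜 := 𝕜), w.orthonormal.inner_sum, map_sum]
    simp only [RCLike.conj_mul]
    norm_cast
  exact le_of_pow_le_pow_left₀ two_ne_zero (norm_nonneg x)
    (hsq ▸ w.orthonormal.sum_inner_products_le x)

theorem norm_finsetProj_le : ‖w.finsetProj s‖ ≤ 1 :=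
  opNorm_le_bound _ zero_le_one fun x ↦ by simpa using w.norm_finsetProj_apply_le s x

theorem tendsto_finsetProj_apply (x : E) : Tendsto (fun s ↦ w.finsetProj s x) atTop (𝓝 x) := by
  simpa [finsetProj_apply, HasSum, w.repr_apply_apply] using w.hasSum_repr x

theorem isCompactOperator_finsetProj : IsCompactOperator (w.finsetProj s) :=
  Submodule.sum_mem (compactOperator (RingHom.id 𝕜) E E) fun _ _ ↦ isCompactOperator_rankOne _ _

theorem adjoint_finsetProj [CompleteSpace E] : adjoint (w.finsetProj s) = w.finsetProj s := by
  simp [finsetProj, map_sum]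

theorem tendsto_finsetProj_comp {c : F →L[𝕜] E} (hc : IsCompactOperator c) :
    Tendsto (fun s ↦ w.finsetProj s ∘L c) atTop (𝓝 c) :=
  tendsto_comp_of_isCompactOperator (C := 1) (by simpa using w.norm_finsetProj_le)
    w.tendsto_finsetProj_apply hc

end HilbertBasis

theorem IsCompactOperator.adjoint [CompleteSpace E] [CompleteSpace F] {c : E →L[𝕜] F}
    (hc : IsCompactOperator c) : IsCompactOperator (c†) := by
  obtain ⟨_, w, -⟩ := exists_hilbertBasis 𝕜 F
  have h : Tendsto (fun s ↦ c† ∘L w.finsetProj s) atTop (𝓝 (c†)) := by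
    simpa [Function.comp_def, adjoint_comp, w.adjoint_finsetProj] using
      (ContinuousLinearMap.adjoint.continuous.tendsto _).comp (w.tendsto_finsetProj_comp hc)
  exact isCompactOperator_of_tendsto h
    (.of_forall fun s ↦ (w.isCompactOperator_finsetProj s).clm_comp (c†))

theorem HilbertBasis.tendsto_comp_finsetProj [CompleteSpace E] [CompleteSpace F]
    (w : HilbertBasis ι 𝕜 E) {c : E →L[𝕜] F} (hc : IsCompactOperator c) :
    Tendsto (fun s ↦ c ∘L w.finsetProj s) atTop (𝓝 c) := by
  have h := (ContinuousLinearMap.adjoint.continuous.tendsto _).comp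
    (w.tendsto_finsetProj_comp hc.adjoint)
  simpa [Function.comp_def, adjoint_comp, w.adjoint_finsetProj] using h

end FinsetProj

theorem HilbertBasis.infinite_of_not_finiteDimensional {ι 𝕜 E : Type*} [RCLike 𝕜]
    [NormedAddCommGroup E] [InnerProductSpace 𝕜 E] (w : HilbertBasis ι 𝕜 E)
    (h : ¬FiniteDimensional 𝕜 E) : Infinite ι := by
  rw [← not_finite_iff_infinite]
  intro
  have := Fintype.ofFinite ι
  exact h (.of_basis w.toOrthonormalBasis.toBasis)

theorem eq_zero_of_tendsto_card_nsmul {ι E : Type*} [Infinite ι] [NormedAddCommGroup E]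
    [NormedSpace ℝ E] {v T : E} (h : Tendsto (fun s : Finset ι ↦ s.card • v) atTop (𝓝 T)) :
    T = 0 := by
  rcases eq_or_ne v 0 with rfl | hv
  · simp only [smul_zero] at h
    exact (tendsto_nhds_unique tendsto_const_nhds h).symm
  · have hnorm : Tendsto (fun s : Finset ι ↦ ‖s.card • v‖) atTop atTop := by
      simp_rw [RCLike.norm_nsmul ℝ, nsmul_eq_mul]
      exact (tendsto_natCast_atTop_atTop.comp tendsto_card_atTop_atTop).atTop_mul_const
        (norm_pos_iff.2 hv)
    exact absurd h.norm (not_tendsto_nhds_of_tendsto_atTop hnorm _)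

section CompactOperators

variable {H ι : Type*} [NormedAddCommGroup H] [InnerProductSpace ℂ H]

theorem coe_kmul (a b : KH H) : (kmul a b : H →L[ℂ] H) = (a : H →L[ℂ] H) ∘L b := rfl

noncomputable def kcomm (c : KH H) : KH H →ₗ[ℂ] KH H :=
  (LinearMap.mulLeft ℂ (c : H →L[ℂ] H) - LinearMap.mulRight ℂ (c : H →L[ℂ] H)).restrict
    fun _ hx ↦ Submodule.sub_mem _ (hx.clm_comp _) (hx.comp_clm _)

theorem kcomm_apply (c x : KH H) : kcomm c x = kmul c x - kmul x c := rfl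

theorem kjo_kjo_sub_kjo_kjo (c a b : KH H) :
    kjo (kjo c a) b - kjo a (kjo c b) = (4 : ℂ)⁻¹ • kcomm c (kmul a b - kmul b a) := by
  apply Subtype.ext
  ext v
  simp only [kjo, kcomm_apply, kmul, Submodule.coe_sub, Submodule.coe_smul, Submodule.coe_add,
    sub_apply, add_apply, smul_apply, comp_apply, map_add, map_sub, map_smul]
  module

namespace HilbertBasis

variable (w : HilbertBasis ι ℂ H)

noncomputable def matrixUnit (j k : ι) : KH H :=
  ⟨rankOne ℂ (w j) (w k), isCompactOperator_rankOne _ _⟩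

theorem kmul_matrixUnit (j k : ι) :
    kmul (w.matrixUnit j k) (w.matrixUnit k j) = w.matrixUnit j j := by
  apply Subtype.ext
  simp [coe_kmul, matrixUnit, rankOne_comp_rankOne, w.orthonormal.norm_eq_one]

theorem _root_.LinearMap.map_matrixUnit_self_eq {M : Type*} [AddCommGroup M] [Module ℂ M]
    (χ : KH H →ₗ[ℂ] M) (hχ : ∀ a b, χ (kmul a b - kmul b a) = 0) (j k : ι) :
    χ (w.matrixUnit j j) = χ (w.matrixUnit k k) := by
  rw [← sub_eq_zero, ← map_sub, ← hχ (w.matrixUnit j k) (w.matrixUnit k j), kmul_matrixUnit,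
    kmul_matrixUnit]

noncomputable def compactFinsetProj (s : Finset ι) : KH H := ∑ j ∈ s, w.matrixUnit j j

theorem coe_compactFinsetProj (s : Finset ι) :
    (w.compactFinsetProj s : H →L[ℂ] H) = w.finsetProj s := by
  simp [compactFinsetProj, finsetProj, matrixUnit]

theorem _root_.LinearMap.map_compactFinsetProj {M : Type*} [AddCommGroup M] [Module ℂ M]
    (χ : KH H →ₗ[ℂ] M) (hχ : ∀ a b, χ (kmul a b - kmul b a) = 0) (j₀ : ι) (s : Finset ι) :
    χ (w.compactFinsetProj s) = s.card • χ (w.matrixUnit j₀ j₀) := by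
  rw [compactFinsetProj, map_sum,
    Finset.sum_congr rfl fun j _ ↦ χ.map_matrixUnit_self_eq w hχ j j₀, Finset.sum_const]

theorem tendsto_kcomm_compactFinsetProj [CompleteSpace H] (c : KH H) :
    Tendsto (fun s ↦ kcomm c (w.compactFinsetProj s)) atTop (𝓝 0) := by
  rw [tendsto_subtype_rng]
  simpa [kcomm_apply, coe_kmul, coe_compactFinsetProj] using
    (w.tendsto_comp_finsetProj c.2).sub (w.tendsto_finsetProj_comp c.2)

theorem tendsto_apply_compactFinsetProj_trace {t : H →L[ℂ] H}
    (htc : Summable fun i ↦ ‖t (w i)‖) (ψ : KH H →L[ℂ] ℂ)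
    (hψ : ∀ b : KH H, ψ b = ∑' i, inner ℂ (w i) ((t ∘L (b : H →L[ℂ] H)) (w i))) :
    Tendsto (fun s ↦ ψ (w.compactFinsetProj s)) atTop (𝓝 (∑' i, inner ℂ (w i) (t (w i)))) := by
  have hdiag : ∀ j, ψ (w.matrixUnit j j) = inner ℂ (w j) (t (w j)) := by
    intro j
    rw [hψ, tsum_eq_single j fun i hij ↦ by
      simp [matrixUnit, w.orthonormal.inner_eq_zero hij.symm]]
    simp [matrixUnit, w.orthonormal.norm_eq_one]
  have hsum : Summable fun j ↦ inner ℂ (w j) (t (w j)) :=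
    htc.of_norm_bounded fun j ↦ by
      simpa [w.orthonormal.norm_eq_one] using norm_inner_le_norm (𝕜 := ℂ) (w j) (t (w j))
  simpa [HasSum, compactFinsetProj, map_sum, hdiag] using hsum.hasSum

end HilbertBasis

end CompactOperators

/-- let `H` be an infinite-dimensional complex Hilbert space, `B = K(H)`,
and `ψ ∈ B*` the functional `ψ(a) = Tr(t a)` given by a trace-class operator `t` with
`Tr t ≠ 0`.  Then the derivation `D = adj_ψ : B → B*`, `D(a)(b) = ψ(ab − ba)`, is not an
inner Jordan derivation: there are no finite families `φ₁, …, φ_m ∈ B*`, `c₁, …, c_m ∈ B`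
with `D = ∑ᵢ (L(φᵢ)L(cᵢ) − L(cᵢ)L(φᵢ))`, i.e. pointwise
`D(a)(b) = ∑ᵢ φᵢ((cᵢ∘a)∘b − a∘(cᵢ∘b))` where `(c∘φ)(b) = φ(c∘b)`. -/
theorem stmt19 {H ι : Type*} [NormedAddCommGroup H] [InnerProductSpace ℂ H]
    [CompleteSpace H]
    (hinf : ¬ FiniteDimensional ℂ H)
    (w : HilbertBasis ι ℂ H)
    (t : H →L[ℂ] H)
    -- `t` is trace class (nuclear with respect to the basis `w`):
    (htc : Summable fun i => ‖t (w i)‖)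
    -- the trace of `t` is nonzero:
    (htr : (∑' i, (inner ℂ (w i) (t (w i)) : ℂ)) ≠ 0)
    -- `ψ ∈ K(H)*` is given by `ψ(b) = Tr (t b)`:
    (ψ : KH H →L[ℂ] ℂ)
    (hψ : ∀ b : KH H, ψ b = ∑' i, (inner ℂ (w i) ((t.comp (b : H →L[ℂ] H)) (w i)) : ℂ)) :
    ¬ ∃ (m : ℕ) (φ : Fin m → (KH H →L[ℂ] ℂ)) (c : Fin m → KH H),
        ∀ a b : KH H,
          ψ (kmul a b - kmul b a) =
            ∑ i : Fin m, φ i (kjo (kjo (c i) a) b - kjo a (kjo (c i) b)) := by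
  rintro ⟨m, φ, c, hD⟩
  have := w.infinite_of_not_finiteDimensional hinf
  obtain ⟨j₀⟩ := Infinite.nonempty ι
  set ρ : KH H →ₗ[ℂ] ℂ := ∑ i, (φ i).toLinearMap ∘ₗ kcomm (c i)
  set χ : KH H →ₗ[ℂ] ℂ := ψ.toLinearMap - (4 : ℂ)⁻¹ • ρ
  have hχ : ∀ a b, χ (kmul a b - kmul b a) = 0 := by
    intro a b
    simp only [χ, ρ, LinearMap.sub_apply, LinearMap.smul_apply, LinearMap.sum_apply,
      LinearMap.comp_apply, ContinuousLinearMap.coe_coe, hD, kjo_kjo_sub_kjo_kjo, map_smul,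
      smul_eq_mul, Finset.mul_sum, sub_self]
  have hρ : Tendsto (fun s ↦ ρ (w.compactFinsetProj s)) atTop (𝓝 0) := by
    simpa [ρ] using tendsto_finsetSum _ fun i _ ↦
      ((φ i).continuous.tendsto 0).comp (w.tendsto_kcomm_compactFinsetProj (c i))
  have hχlim := (w.tendsto_apply_compactFinsetProj_trace htc ψ hψ).sub (hρ.const_smul (4 : ℂ)⁻¹)
  refine htr (eq_zero_of_tendsto_card_nsmul (ι := ι) (v := χ (w.matrixUnit j₀ j₀)) ?_)
  simp_rw [← χ.map_compactFinsetProj w hχ j₀]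
  simpa [χ] using hχlim
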